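/- arXiv:1201.5992 — 3 statements merged into one kernel-verified Lean document; each statement's English description precedes it below -/
import Mathlib

section
/- Let U ⊆ F_q³ be a set of q² − 2 points that does not determine the points of C, with ∑_{u∈U} u = (0,0,0). If the line at infinity l(y,z,w) meets C for the nonzero triple (y,z,w) ∈ F_q³, then in F_q[X] one has the exact identity (∏_{u ∈ U} (X + u·(y,z,w))) · (X² − σ₂(y,z,w)) = (X^q − X)^q. -/
/-- The dot product on `F³`. -/
def dot3 {F : Type*} [Field F] (u v : F × F × F) : F :=
  u.1 * v.1 + u.2.1 * v.2.1 + u.2.2 * v.2.2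

/-- The nondegenerate quadratic form `Q(t₀,t₁,t₂) = t₁² − t₀t₂` defining the conic `C`. -/
def quadQ {F : Type*} [Field F] (t : F × F × F) : F :=
  t.2.1 ^ 2 - t.1 * t.2.2

/-- `U` does not determine the points of the conic `C`:
`Q(u − u') ≠ 0` for all distinct `u, u' ∈ U`. -/
def NoDetermine {F : Type*} [Field F] (U : Finset (F × F × F)) : Prop :=
  ∀ u ∈ U, ∀ u' ∈ U, u ≠ u' → quadQ (u - u') ≠ 0

/-- The line at infinity `l(y,z,w)` meets the conic `C`. -/
def MeetsConic {F : Type*} [Field F] (v : F × F × F) : Prop :=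
  ∃ t : F × F × F, t ≠ 0 ∧ quadQ t = 0 ∧ dot3 v t = 0

/-- `σ_i(y,z,w)`: the `i`-th elementary symmetric function of the multiset
`{u·(y,z,w) : u ∈ U}`. -/
def sigmaU {F : Type*} [Field F] (U : Finset (F × F × F)) (v : F × F × F) (i : ℕ) : F :=
  (U.val.map (fun u => dot3 u v)).esymm i

/-!
Since `l(v)` meets `C` at some isotropic `t` with `v·t = 0`, the plane `v^⊥` contains the
isotropic line `⟨t⟩`; a second functional `m` cuts `v^⊥` exactly in `⟨t⟩`. Two points of `U`
in the same fibre of `u ↦ u·v` and with the same `m`-coordinate differ by an isotropic vector,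
so each value of `u·v` is taken at most `q` times. As `|U| = q² - 2`, the multiset `{u·v}` is
`q` copies of `F_q` minus two values, which sum to `0` because `∑ u = 0`; call them `r, -r`.
Hence `∏ (X + u·v) · (X² - r²) = (∏_a (X + a))^q = (X^q - X)^q = X^{q²} - X^q`, and comparing
coefficients of `X^{q²-2}` gives `σ₂ = r²`.
-/

open Polynomial

theorem Multiset.le_nsmul_univ_of_count_le {α : Type*} [Fintype α] [DecidableEq α]
    {s : Multiset α} {n : ℕ} (h : ∀ a, s.count a ≤ n) : s ≤ n • Finset.univ.val :=
  Multiset.le_iff_count.2 fun a => by simpa using h a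

theorem Multiset.coeff_prod_map_X_add_C_mul_X_sq_sub_C {R : Type*} [CommRing R]
    (s : Multiset R) (hs : 2 ≤ Multiset.card s) (c : R) :
    ((s.map fun a => X + C a).prod * (X ^ 2 - C c)).coeff (Multiset.card s) = s.esymm 2 - c := by
  rw [mul_sub, coeff_sub, coeff_mul_X_pow', if_pos hs, coeff_mul_C,
    Multiset.prod_X_add_C_coeff s (by omega), Multiset.prod_X_add_C_coeff s le_rfl,
    Nat.sub_sub_self hs, Nat.sub_self]
  simp [Multiset.esymm]

namespace FiniteField
variable {F : Type*} [Field F] [Fintype F]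

theorem prod_univ_X_add_C : ∏ a : F, (X + C a) = X ^ Fintype.card F - X := by
  have hmonic : (X ^ Fintype.card F - X : F[X]).Monic :=
    monic_X_pow_sub (by rw [degree_X]; exact_mod_cast Fintype.one_lt_card)
  have hcard : Multiset.card (X ^ Fintype.card F - X : F[X]).roots =
      (X ^ Fintype.card F - X : F[X]).natDegree := by
    rw [roots_X_pow_card_sub_X, X_pow_card_sub_X_natDegree_eq F Fintype.one_lt_card]
    rfl
  rw [← prod_multiset_X_sub_C_of_monic_of_roots_card_eq hmonic hcard, roots_X_pow_card_sub_X,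
    ← Finset.prod_eq_multiset_prod, ← Equiv.prod_comp (Equiv.neg F)]
  simp [sub_eq_add_neg]

theorem X_pow_card_sub_X_pow_card :
    (X ^ Fintype.card F - X : F[X]) ^ Fintype.card F =
      X ^ (Fintype.card F * Fintype.card F) - X ^ Fintype.card F := by
  rw [← expand_card]
  simp [pow_mul]

theorem exists_prod_map_X_add_C_mul_X_sq_sub_C_eq {D : Multiset F}
    (hle : D ≤ Fintype.card F • Finset.univ.val)
    (hcard : Multiset.card D = Fintype.card F ^ 2 - 2) (hsum : D.sum = 0) :
    ∃ r : F, (D.map fun a => X + C a).prod * (X ^ 2 - C (r ^ 2)) =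
      (X ^ Fintype.card F - X) ^ Fintype.card F := by
  classical
  set N : Multiset F := Fintype.card F • Finset.univ.val
  have hN : D + (N - D) = N := add_tsub_cancel_of_le hle
  obtain ⟨r, s, hrs⟩ : ∃ r s, N - D = {r, s} := by
    refine Multiset.card_eq_two.1 ?_
    have := Fintype.one_lt_card (α := F)
    rw [Multiset.card_sub hle, hcard, Multiset.card_nsmul, Finset.card_val, Finset.card_univ, sq]
    have : 2 ≤ Fintype.card F * Fintype.card F := by nlinarith
    omega
  have hs : s = -r := by
    have := congrArg Multiset.sum hN
    rw [Multiset.sum_add, hsum, hrs, Multiset.sum_nsmul, nsmul_eq_mul,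
      FiniteField.cast_card_eq_zero, zero_mul] at this
    simp only [Multiset.insert_eq_cons, Multiset.sum_cons, Multiset.sum_singleton, zero_add] at this
    linear_combination this
  refine ⟨r, ?_⟩
  have hNprod : (N.map fun a => X + C a).prod = (X ^ Fintype.card F - X) ^ Fintype.card F := by
    rw [Multiset.map_nsmul, Multiset.prod_nsmul, ← prod_univ_X_add_C, Finset.prod_eq_multiset_prod]
  rw [← hNprod, ← hN, hrs, Multiset.map_add, Multiset.prod_add, hs]
  simp only [Multiset.insert_eq_cons, Multiset.map_cons, Multiset.map_singleton,
    Multiset.prod_cons, Multiset.prod_singleton, map_neg, map_pow]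
  ring

theorem esymm_two_eq_of_prod_map_X_add_C_mul_eq (hq : Fintype.card F ≠ 2) {D : Multiset F}
    (hcard : Multiset.card D = Fintype.card F ^ 2 - 2) {c : F}
    (h : (D.map fun a => X + C a).prod * (X ^ 2 - C c) =
      (X ^ Fintype.card F - X) ^ Fintype.card F) :
    D.esymm 2 = c := by
  obtain ⟨hq₁, hq₂, hq₃⟩ : Fintype.card F ^ 2 - 2 ≠ Fintype.card F * Fintype.card F ∧
      Fintype.card F ^ 2 - 2 ≠ Fintype.card F ∧ 2 ≤ Fintype.card F ^ 2 - 2 := by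
    have h3 : 3 ≤ Fintype.card F := by
      have : 1 < Fintype.card F := Fintype.one_lt_card
      omega
    have : 3 * Fintype.card F ≤ Fintype.card F * Fintype.card F := Nat.mul_le_mul_right _ h3
    rw [sq]
    omega
  have hcoeff := D.coeff_prod_map_X_add_C_mul_X_sq_sub_C (hcard ▸ hq₃) c
  rw [h, X_pow_card_sub_X_pow_card, coeff_sub, coeff_X_pow, coeff_X_pow, hcard,
    if_neg hq₁, if_neg hq₂, sub_zero] at hcoeff
  exact sub_eq_zero.1 hcoeff.symm

end FiniteField

section Conic
variable {F : Type*}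

def rev3 (t : F × F × F) : F × F × F := (t.2.2, t.2.1, t.1)

theorem rev3_rev3 (t : F × F × F) : rev3 (rev3 t) = t := rfl

variable [Field F]

theorem dot3_sub_left (a b v : F × F × F) : dot3 (a - b) v = dot3 a v - dot3 b v := by
  simp only [dot3, Prod.fst_sub, Prod.snd_sub]
  ring

theorem sum_dot3 {ι : Type*} (s : Finset ι) (f : ι → F × F × F) (v : F × F × F) :
    ∑ i ∈ s, dot3 (f i) v = dot3 (∑ i ∈ s, f i) v := by
  simp only [dot3, Prod.fst_sum, Prod.snd_sum, Finset.sum_add_distrib, Finset.sum_mul]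

theorem dot3_rev3 (u v : F × F × F) : dot3 (rev3 u) (rev3 v) = dot3 u v := by
  simp only [dot3, rev3]
  ring

theorem quadQ_rev3 (t : F × F × F) : quadQ (rev3 t) = quadQ t := by
  simp only [quadQ, rev3]
  ring

theorem exists_forall_quadQ_eq_zero_of_fst_ne_zero {v t : F × F × F} (hv : v ≠ 0)
    (ht : t.1 ≠ 0) (hQ : quadQ t = 0) (hvt : dot3 v t = 0) :
    ∃ m, ∀ d, dot3 d v = 0 → dot3 d m = 0 → quadQ d = 0 := by
  obtain ⟨t₀, t₁, t₂⟩ := t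
  obtain ⟨v₀, v₁, v₂⟩ := v
  simp only [quadQ, dot3] at ht hQ hvt
  -- In both cases `m ⊥ t` and `m` is not proportional to `v`, so `v^⊥ ∩ m^⊥ = ⟨t⟩`.
  by_cases hv₂ : v₂ = 0
  · subst hv₂
    have hv₁ : v₁ ≠ 0 := by
      rintro rfl
      have hv₀ : v₀ = 0 :=
        (mul_eq_zero.1 (by linear_combination hvt : v₀ * t₀ = 0)).resolve_right ht
      exact hv (by simp [hv₀])
    refine ⟨(0, t₁, -t₀), fun ⟨d₀, d₁, d₂⟩ hdv hdm => ?_⟩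
    simp only [quadQ, dot3] at hdv hdm ⊢
    have key : v₁ * t₀ ^ 2 * (d₁ ^ 2 - d₀ * d₂) = 0 := by
      linear_combination (d₁ * t₀ * t₀) * hdv - (d₁ * t₀ * d₀) * hvt + (v₁ * t₀ * d₀) * hdm
    exact (mul_eq_zero.1 key).resolve_left (mul_ne_zero hv₁ (pow_ne_zero 2 ht))
  · refine ⟨(t₁, -t₀, 0), fun ⟨d₀, d₁, d₂⟩ hdv hdm => ?_⟩
    simp only [quadQ, dot3] at hdv hdm ⊢
    have key : v₂ * t₀ ^ 2 * (d₁ ^ 2 - d₀ * d₂) = 0 := by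
      linear_combination -(v₂ * (t₀ * d₁ + t₁ * d₀) + t₀ * d₀ * v₁) * hdm +
        (v₂ * d₀ ^ 2) * hQ - (t₀ ^ 2 * d₀) * hdv + (t₀ * d₀ ^ 2) * hvt
    exact (mul_eq_zero.1 key).resolve_left (mul_ne_zero hv₂ (pow_ne_zero 2 ht))

theorem MeetsConic.exists_forall_quadQ_eq_zero {v : F × F × F} (hmeet : MeetsConic v)
    (hv : v ≠ 0) : ∃ m, ∀ d, dot3 d v = 0 → dot3 d m = 0 → quadQ d = 0 := by
  obtain ⟨t, ht, hQ, hvt⟩ := hmeet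
  by_cases ht₀ : t.1 = 0
  · have ht₂ : (rev3 t).1 ≠ 0 := by
      obtain ⟨t₀, t₁, t₂⟩ := t
      simp only [quadQ, rev3] at ht₀ hQ ⊢
      rintro rfl
      subst ht₀
      exact ht (by simp_all)
    obtain ⟨m, hm⟩ := exists_forall_quadQ_eq_zero_of_fst_ne_zero (v := rev3 v)
      (by simpa [rev3, Prod.ext_iff, and_comm, and_left_comm] using hv) ht₂
      (by rwa [quadQ_rev3]) (by rwa [dot3_rev3])
    refine ⟨rev3 m, fun d hdv hdm => ?_⟩
    rw [← quadQ_rev3]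
    exact hm (rev3 d) (by rwa [dot3_rev3]) (by rwa [← dot3_rev3, rev3_rev3] at hdm)
  · exact exists_forall_quadQ_eq_zero_of_fst_ne_zero hv ht₀ hQ hvt

theorem NoDetermine.map_dot3_le_nsmul_univ [Fintype F] {U : Finset (F × F × F)}
    (hU : NoDetermine U) {v : F × F × F} (hmeet : MeetsConic v) (hv : v ≠ 0) :
    U.val.map (fun u => dot3 u v) ≤ Fintype.card F • Finset.univ.val := by
  classical
  obtain ⟨m, hm⟩ := hmeet.exists_forall_quadQ_eq_zero hv
  refine Multiset.le_nsmul_univ_of_count_le fun a => ?_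
  rw [Multiset.count_map, ← Finset.filter_val, Finset.card_val, ← Finset.card_univ]
  refine Finset.card_le_card_of_injOn (fun u => dot3 u m) (fun _ _ => Finset.mem_univ _) ?_
  intro u hu u' hu' huu'
  by_contra hne
  simp only [Finset.coe_filter, Set.mem_ofPred_eq] at hu hu'
  exact hU u hu.1 u' hu'.1 hne <| hm _ (by rw [dot3_sub_left, ← hu.2, ← hu'.2, sub_self])
    (by rw [dot3_sub_left, sub_eq_zero]; exact huu')

end Conic

open Polynomial in
theorem stmt_2_general {p h : ℕ} (hodd : Odd p)
    {F : Type*} [Field F] [Fintype F]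
    (hcard : Fintype.card F = p ^ h)
    (U : Finset (F × F × F))
    (hUcard : U.card = Fintype.card F ^ 2 - 2)
    (hU : NoDetermine U)
    (hsum : ∑ u ∈ U, u = 0)
    (v : F × F × F) (hv : v ≠ 0) (hmeet : MeetsConic v) :
    (∏ u ∈ U, (X + C (dot3 u v))) * (X ^ 2 - C (sigmaU U v 2)) =
      (X ^ Fintype.card F - X) ^ Fintype.card F := by
  have hq : Fintype.card F ≠ 2 := by
    obtain ⟨k, hk⟩ : Odd (Fintype.card F) := hcard ▸ hodd.pow
    omega
  set D := U.val.map fun u => dot3 u v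
  have hDsum : D.sum = 0 := by
    rw [← Finset.sum_eq_multiset_sum, sum_dot3, hsum]
    simp [dot3]
  have hDcard : Multiset.card D = Fintype.card F ^ 2 - 2 := (Multiset.card_map _ _).trans hUcard
  obtain ⟨r, hr⟩ := FiniteField.exists_prod_map_X_add_C_mul_X_sq_sub_C_eq
    (hU.map_dot3_le_nsmul_univ hmeet hv) hDcard hDsum
  have hσ : sigmaU U v 2 = r ^ 2 := FiniteField.esymm_two_eq_of_prod_map_X_add_C_mul_eq hq hDcard hr
  rw [hσ, ← hr, Finset.prod_eq_multiset_prod, Multiset.map_map]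
  rfl

open Polynomial in
theorem stmt_2 {p h : ℕ} (hp : p.Prime) (hodd : Odd p) (hh : 1 ≤ h)
    {F : Type*} [Field F] [Fintype F] [DecidableEq F]
    (hcard : Fintype.card F = p ^ h)
    (U : Finset (F × F × F))
    (hUcard : U.card = Fintype.card F ^ 2 - 2)
    (hU : NoDetermine U)
    (hsum : ∑ u ∈ U, u = 0)
    (v : F × F × F) (hv : v ≠ 0) (hmeet : MeetsConic v) :
    (∏ u ∈ U, (X + C (dot3 u v))) * (X ^ 2 - C (sigmaU U v 2)) =
      (X ^ Fintype.card F - X) ^ Fintype.card F :=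
  stmt_2_general hodd hcard U hUcard hU hsum v hv hmeet
end

section
/- Let q = p^h with p an odd prime and h ≥ 1, and let U ⊆ F_q³ be a set of q² − 2 points that does not determine the points of C. If U is not extendable (i.e. there is no v ∈ F_q³ \ U such that U ∪ {v} does not determine the points of C), then h = 1, i.e. q = p. Equivalently: for q = p^h with p an odd prime and h > 1, every set of q² − 2 points of F_q³ not determining the points of C is extendable. -/
/-!
Translate `U` so that its points sum to zero; this is possible because `|U| = -2 ≠ 0` in `F`.
Projecting from a point of the conic maps `U` injectively into `F²`, and power sums of linear
forms over all of `F²` vanish; so the two missed points are `±x`, and every even power sum of a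
linear form over the projection is `-2` times its value at `x`.

In degree two this computes the moment matrix `G = ∑ u uᵀ` along every projection. Along the
pencil of conic points `(1, s, s²)` the restricted `2 × 2` Gram determinants vanish identically
in `s`, which pins down the adjugate of `G` up to a scalar `λ`. If `λ = 0`, then `G = -2 r rᵀ` and
`r` projects, from every point of the conic, onto a missed point; hence `r - u` is never on the
conic for `u ∈ U`, and `r` extends `U`. If `λ ≠ 0`, then `G` has a rigid nondegenerate shape,
which the power sum of degree `p^(h-1) + 1` contradicts: for `h > 1` the Frobenius map separates
the powers of `s` that occur.
-/

open Finset Polynomial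

section Algebra

variable {F : Type*} [Field F]

theorem eq_zero_of_forall_sum_mul_pow_eq_zero [Fintype F] {n : ℕ} {e : Fin n → ℕ}
    (he : Function.Injective e) (hlt : ∀ i, e i < Fintype.card F) {c : Fin n → F}
    (h : ∀ x : F, ∑ i, c i * x ^ e i = 0) (i : Fin n) : c i = 0 := by
  set f : F[X] := ∑ j, C (c j) * X ^ e j
  have hdeg : f.natDegree < Fintype.card F :=
    (natDegree_sum_le_of_forall_le _ _ (n := Fintype.card F - 1) fun j _ =>
      (natDegree_C_mul_X_pow_le _ _).trans (Nat.le_sub_one_of_lt (hlt j))).trans_lt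
      (Nat.sub_lt Fintype.card_pos one_pos)
  have hf : f = 0 := f.eq_zero_of_natDegree_lt_card_of_eval_eq_zero' univ
    (fun x _ => by simpa [f, eval_finsetSum] using h x) (by simpa using hdeg)
  simpa [f, finsetSum_coeff, coeff_C_mul_X_pow, he.eq_iff] using congrArg (coeff · (e i)) hf

theorem sum_linear_pow_eq_zero [Fintype F] (a b : F) (k : ℕ) :
    ∑ y : F × F, (a * y.1 + b * y.2) ^ k = 0 := by
  rw [Fintype.sum_prod_type]
  by_cases hb : b = 0
  · simp [hb]
  · have hinner (y₁ : F) : ∑ y₂ : F, (a * y₁ + b * y₂) ^ k = ∑ z : F, z ^ k :=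
      Equiv.sum_comp ((Equiv.mulLeft₀ b hb).trans (Equiv.addLeft (a * y₁))) (· ^ k)
    simp [hinner]

theorem sum_linear_pow_eq_neg_sum_compl [Fintype F] [DecidableEq F] (T : Finset (F × F))
    (a b : F) (k : ℕ) :
    ∑ t ∈ T, (a * t.1 + b * t.2) ^ k = -∑ t ∈ Tᶜ, (a * t.1 + b * t.2) ^ k :=
  eq_neg_of_add_eq_zero_left ((sum_add_sum_compl T _).trans (sum_linear_pow_eq_zero a b k))

theorem eq_or_eq_neg_of_sq_eq_sq_of_mul_eq_mul {a b c d : F} (hac : a ^ 2 = c ^ 2)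
    (hbd : b ^ 2 = d ^ 2) (habcd : a * b = c * d) : (a, b) = (c, d) ∨ (a, b) = -(c, d) := by
  rcases eq_or_ne c 0 with rfl | hc
  · obtain rfl : a = 0 := by simpa using hac
    rcases sq_eq_sq_iff_eq_or_eq_neg.mp hbd with rfl | rfl <;> simp
  · rcases sq_eq_sq_iff_eq_or_eq_neg.mp hac with rfl | rfl
    · simp [mul_left_cancel₀ hc habcd]
    · simp [mul_left_cancel₀ hc (by linear_combination -habcd : c * b = c * -d)]

theorem exists_sum_image_add_eq_zero {V : Type*} [AddCommGroup V] [Module F V] [DecidableEq V]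
    (U : Finset V) (hU : (U.card : F) ≠ 0) : ∃ m : V, ∑ u ∈ U.image (· + m), u = 0 := by
  refine ⟨-(U.card : F)⁻¹ • ∑ u ∈ U, u, ?_⟩
  rw [sum_image fun _ _ _ _ => add_right_cancel, sum_add_distrib, sum_const,
    ← Nat.cast_smul_eq_nsmul F, smul_smul, mul_neg, mul_inv_cancel₀ hU, neg_smul,
    one_smul, add_neg_cancel]

theorem two_le_card_sq [Fintype F] : 2 ≤ Fintype.card F ^ 2 := by
  nlinarith [Fintype.one_lt_card (α := F)]

theorem cast_card_sq_sub_two [Fintype F] : ((Fintype.card F ^ 2 - 2 : ℕ) : F) = -2 := by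
  simp [Nat.cast_sub (two_le_card_sq (F := F))]

theorem Nat.Prime.three_le_of_odd {p : ℕ} (hp : p.Prime) (hodd : Odd p) : 3 ≤ p := by
  obtain ⟨m, rfl⟩ := hodd
  have := hp.two_le
  omega

theorem two_ne_zero_of_odd {p : ℕ} [Fact p.Prime] [CharP F p] (hp : Odd p) : (2 : F) ≠ 0 := by
  intro h2
  have : p ∣ 2 := (CharP.cast_eq_zero_iff F p 2).mp (by exact_mod_cast h2)
  rw [Nat.prime_dvd_prime_iff_eq Fact.out Nat.prime_two] at this
  subst this
  exact absurd hp (by decide)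

theorem add_mul_pow_char_pow_succ {p : ℕ} [Fact p.Prime] [CharP F p] (e : ℕ) (A B b : F) :
    (A + b * B) ^ (p ^ e + 1) = A ^ (p ^ e + 1) + A ^ p ^ e * B * b
      + A * B ^ p ^ e * b ^ p ^ e + B ^ (p ^ e + 1) * b ^ (p ^ e + 1) := by
  rw [pow_succ, add_pow_char_pow, mul_pow]
  ring

end Algebra

section Conic

variable {F : Type*} [Field F]

theorem dot3_sub (v a b : F × F × F) : dot3 v (a - b) = dot3 v a - dot3 v b := by
  simp only [dot3, Prod.fst_sub, Prod.snd_sub]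
  ring

theorem dot3_sum {ι : Type*} (v : F × F × F) (s : Finset ι) (f : ι → F × F × F) :
    dot3 v (∑ i ∈ s, f i) = ∑ i ∈ s, dot3 v (f i) := by
  simp only [dot3, Prod.fst_sum, Prod.snd_sum, mul_sum, sum_add_distrib]

theorem quadQ_neg (t : F × F × F) : quadQ (-t) = quadQ t := by
  simp only [quadQ, Prod.fst_neg, Prod.snd_neg]
  ring

/-- The line `v₁ᗮ ∩ v₂ᗮ` is a point of the conic. -/
def IsConicPair (v₁ v₂ : F × F × F) : Prop :=
  ∀ d : F × F × F, dot3 v₁ d = 0 → dot3 v₂ d = 0 → quadQ d = 0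

/-- `(s², 0, -1)ᗮ ∩ (-s, 1, 0)ᗮ` is spanned by `(1, s, s²)`; together with `isConicPair_infty`
this covers every point of the conic. -/
theorem isConicPair_pencil (s : F) : IsConicPair (s ^ 2, 0, -1) (-s, 1, 0) := by
  intro d h₁ h₂
  simp only [dot3, quadQ] at *
  linear_combination (d.2.1 + s * d.1) * h₂ + d.1 * h₁

theorem isConicPair_infty : IsConicPair ((1, 0, 0) : F × F × F) (0, 1, 0) := by
  intro d h₁ h₂
  simp only [dot3, quadQ] at *
  linear_combination d.2.1 * h₂ - d.2.2 * h₁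

theorem exists_isConicPair_of_quadQ_eq_zero {d : F × F × F} (hd : quadQ d = 0) :
    ∃ v₁ v₂, IsConicPair v₁ v₂ ∧ dot3 v₁ d = 0 ∧ dot3 v₂ d = 0 := by
  obtain ⟨d₀, d₁, d₂⟩ := d
  simp only [quadQ] at hd
  by_cases h₀ : d₀ = 0
  · have h₁ : d₁ = 0 := pow_eq_zero_iff two_ne_zero |>.mp (by simpa [h₀] using hd)
    exact ⟨_, _, isConicPair_infty, by simp [dot3, h₀], by simp [dot3, h₁]⟩
  · refine ⟨_, _, isConicPair_pencil (d₁ / d₀), ?_, ?_⟩ <;> simp only [dot3] <;> field_simp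
    · linear_combination hd
    · ring

theorem NoDetermine.injOn {W : Finset (F × F × F)} (hW : NoDetermine W) {v₁ v₂ : F × F × F}
    (hv : IsConicPair v₁ v₂) : Set.InjOn (fun u => (dot3 v₁ u, dot3 v₂ u)) W := by
  intro u hu u' hu' h
  obtain ⟨h₁, h₂⟩ := Prod.mk.inj h
  by_contra hne
  exact hW u hu u' hu' hne (hv _ (by rw [dot3_sub, h₁, sub_self]) (by rw [dot3_sub, h₂, sub_self]))

variable [DecidableEq F]

theorem NoDetermine.insert {W : Finset (F × F × F)} (hW : NoDetermine W) {r : F × F × F}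
    (hr : ∀ u ∈ W, quadQ (r - u) ≠ 0) : NoDetermine (insert r W) := by
  intro x hx y hy hxy
  rw [mem_insert] at hx hy
  rcases hx with rfl | hx <;> rcases hy with rfl | hy
  · exact absurd rfl hxy
  · exact hr y hy
  · rw [← neg_sub, quadQ_neg]
    exact hr x hx
  · exact hW x hx y hy hxy

theorem NoDetermine.image_add_right {U : Finset (F × F × F)} (hU : NoDetermine U)
    (m : F × F × F) : NoDetermine (U.image (· + m)) := by
  simp only [NoDetermine, mem_image, forall_exists_index, and_imp, forall_apply_eq_imp_iff₂,
    add_sub_add_right_eq_sub]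
  exact fun u hu u' hu' hne => hU u hu u' hu' fun h => hne (h ▸ rfl)

def Extendable (U : Finset (F × F × F)) : Prop :=
  ∃ v, v ∉ U ∧ NoDetermine (insert v U)

theorem Extendable.of_image_add_right {U : Finset (F × F × F)} {m : F × F × F}
    (h : Extendable (U.image (· + m))) : Extendable U := by
  obtain ⟨v, hv, hnd⟩ := h
  refine ⟨v - m, fun hvU => hv (mem_image.mpr ⟨v - m, hvU, sub_add_cancel v m⟩), ?_⟩
  have : insert (v - m) U = (insert v (U.image (· + m))).image (· + -m) := by
    rw [image_insert, image_image]
    simp [Function.comp_def, sub_eq_add_neg]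
  rw [this]
  exact hnd.image_add_right (-m)

end Conic

section Moments

variable {F : Type*} [Field F] {W : Finset (F × F × F)} {v₁ v₂ : F × F × F}

/-- `W` projects from the conic point `v₁ᗮ ∩ v₂ᗮ` injectively onto `F² ∖ {x, -x}`. -/
structure ProjectionMisses (W : Finset (F × F × F)) (v₁ v₂ : F × F × F) (x : F × F) : Prop where
  ne_zero : x ≠ 0
  ne_of_mem : ∀ u ∈ W, (dot3 v₁ u, dot3 v₂ u) ≠ x
  ne_neg_of_mem : ∀ u ∈ W, (dot3 v₁ u, dot3 v₂ u) ≠ -x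
  sum_pow : ∀ k, Even k → ∀ a b : F,
    ∑ u ∈ W, (a * dot3 v₁ u + b * dot3 v₂ u) ^ k = -2 * (a * x.1 + b * x.2) ^ k

theorem exists_projectionMisses [Fintype F] [DecidableEq F] (hW : NoDetermine W)
    (hcard : W.card = Fintype.card F ^ 2 - 2) (hsum : ∑ u ∈ W, u = 0) (hv : IsConicPair v₁ v₂) :
    ∃ x, ProjectionMisses W v₁ v₂ x := by
  set π : F × F × F → F × F := fun u => (dot3 v₁ u, dot3 v₂ u)
  have hinj : Set.InjOn π W := hW.injOn hv
  have hcompl : (W.image π)ᶜ.card = 2 := by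
    have := two_le_card_sq (F := F)
    rw [card_compl, card_image_of_injOn hinj, hcard, Fintype.card_prod, ← sq]
    omega
  obtain ⟨x, y, hxy, hc⟩ := card_eq_two.mp hcompl
  have hsum_pow (k : ℕ) (a b : F) : ∑ u ∈ W, (a * dot3 v₁ u + b * dot3 v₂ u) ^ k
      = -((a * x.1 + b * x.2) ^ k + (a * y.1 + b * y.2) ^ k) := by
    have h := sum_linear_pow_eq_neg_sum_compl (W.image π) a b k
    rwa [sum_image hinj, hc, sum_pair hxy] at h
  have hdot (v : F × F × F) : ∑ u ∈ W, dot3 v u = 0 := by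
    rw [← dot3_sum, hsum]
    simp [dot3]
  have hy : y = -x := by
    have h₁ := hsum_pow 1 1 0
    have h₂ := hsum_pow 1 0 1
    simp only [one_mul, zero_mul, add_zero, zero_add, pow_one, hdot] at h₁ h₂
    ext <;> simp only [Prod.fst_neg, Prod.snd_neg]
    · linear_combination h₁
    · linear_combination h₂
  have hnot_mem (z : F × F) (hz : z ∈ ({x, y} : Finset (F × F))) (u : F × F × F) (hu : u ∈ W) :
      π u ≠ z := fun h => by
    rw [← hc, mem_compl] at hz
    exact hz (h ▸ mem_image_of_mem π hu)
  refine ⟨x, fun hx => hxy (by rw [hy, hx, neg_zero]), fun u hu => hnot_mem x (by simp) u hu,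
    fun u hu => hy ▸ hnot_mem y (by simp) u hu, fun k hk a b => ?_⟩
  rw [hsum_pow, hy, Prod.fst_neg, Prod.snd_neg, ← hk.neg_pow (a * x.1 + b * x.2)]
  ring

def secondMoment (W : Finset (F × F × F)) (v w : F × F × F) : F :=
  ∑ u ∈ W, dot3 v u * dot3 w u

theorem secondMoment_eq_sum (W : Finset (F × F × F)) (v w : F × F × F) :
    secondMoment W v w = v.1 * w.1 * ∑ u ∈ W, u.1 * u.1
      + (v.1 * w.2.1 + v.2.1 * w.1) * ∑ u ∈ W, u.1 * u.2.1
      + (v.1 * w.2.2 + v.2.2 * w.1) * ∑ u ∈ W, u.1 * u.2.2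
      + v.2.1 * w.2.1 * ∑ u ∈ W, u.2.1 * u.2.1
      + (v.2.1 * w.2.2 + v.2.2 * w.2.1) * ∑ u ∈ W, u.2.1 * u.2.2
      + v.2.2 * w.2.2 * ∑ u ∈ W, u.2.2 * u.2.2 := by
  simp only [secondMoment, dot3, mul_sum, ← sum_add_distrib]
  exact sum_congr rfl fun u _ => by ring

theorem ProjectionMisses.secondMoment_eq {x : F × F} (hx : ProjectionMisses W v₁ v₂ x)
    (h2 : (2 : F) ≠ 0) :
    secondMoment W v₁ v₁ = -2 * x.1 ^ 2 ∧ secondMoment W v₂ v₂ = -2 * x.2 ^ 2 ∧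
      secondMoment W v₁ v₂ = -2 * (x.1 * x.2) := by
  have h₁ := hx.sum_pow 2 even_two 1 0
  have h₂ := hx.sum_pow 2 even_two 0 1
  have h₁₂ := hx.sum_pow 2 even_two 1 1
  simp only [one_mul, zero_mul, add_zero, zero_add, add_sq, sum_add_distrib, mul_assoc,
    ← mul_sum] at h₁ h₂ h₁₂
  simp only [secondMoment, ← sq]
  refine ⟨h₁, h₂, mul_left_cancel₀ h2 ?_⟩
  linear_combination h₁₂ - h₁ - h₂

theorem ProjectionMisses.pencil_moments {s : F} {x : F × F}
    (hx : ProjectionMisses W (s ^ 2, 0, -1) (-s, 1, 0) x) (h2 : (2 : F) ≠ 0) :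
    s ^ 4 * ∑ u ∈ W, u.1 * u.1 - 2 * s ^ 2 * ∑ u ∈ W, u.1 * u.2.2 + ∑ u ∈ W, u.2.2 * u.2.2
        = -2 * x.1 ^ 2 ∧
      s ^ 2 * ∑ u ∈ W, u.1 * u.1 - 2 * s * ∑ u ∈ W, u.1 * u.2.1 + ∑ u ∈ W, u.2.1 * u.2.1
        = -2 * x.2 ^ 2 ∧
      -s ^ 3 * ∑ u ∈ W, u.1 * u.1 + s ^ 2 * ∑ u ∈ W, u.1 * u.2.1 + s * ∑ u ∈ W, u.1 * u.2.2
        - ∑ u ∈ W, u.2.1 * u.2.2 = -2 * (x.1 * x.2) := by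
  obtain ⟨h₁, h₂, h₁₂⟩ := hx.secondMoment_eq h2
  simp only [secondMoment_eq_sum] at h₁ h₂ h₁₂
  exact ⟨by linear_combination h₁, by linear_combination h₂, by linear_combination h₁₂⟩

theorem secondMoment_eq_of_sum_mul_eq {r : F × F × F}
    (h₀₀ : ∑ u ∈ W, u.1 * u.1 = -2 * r.1 ^ 2) (h₀₁ : ∑ u ∈ W, u.1 * u.2.1 = -2 * (r.1 * r.2.1))
    (h₀₂ : ∑ u ∈ W, u.1 * u.2.2 = -2 * (r.1 * r.2.2)) (h₁₁ : ∑ u ∈ W, u.2.1 * u.2.1 = -2 * r.2.1 ^ 2)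
    (h₁₂ : ∑ u ∈ W, u.2.1 * u.2.2 = -2 * (r.2.1 * r.2.2))
    (h₂₂ : ∑ u ∈ W, u.2.2 * u.2.2 = -2 * r.2.2 ^ 2) (v w : F × F × F) :
    secondMoment W v w = -2 * (dot3 v r * dot3 w r) := by
  rw [secondMoment_eq_sum, h₀₀, h₀₁, h₀₂, h₁₁, h₁₂, h₂₂]
  simp only [dot3]
  ring

theorem ProjectionMisses.sum_mul_pow_char_pow [Fintype F] {p : ℕ} [Fact p.Prime] [CharP F p]
    (hp : Odd p) {x : F × F} (hx : ProjectionMisses W v₁ v₂ x) {e : ℕ} (he : e ≠ 0)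
    (hq : p ^ e + 1 < Fintype.card F) :
    ∑ u ∈ W, dot3 v₁ u * dot3 v₂ u ^ p ^ e = -2 * (x.1 * x.2 ^ p ^ e) := by
  have hφ : 2 ≤ p ^ e := (Fact.out : p.Prime).two_le.trans (Nat.le_self_pow he p)
  have hinj : Function.Injective ![0, 1, p ^ e, p ^ e + 1] := by
    intro i j hij
    have := (Fact.out : p.Prime).one_lt
    fin_cases i <;> fin_cases j <;> simp at hij ⊢ <;> omega
  have hlt : ∀ i, ![0, 1, p ^ e, p ^ e + 1] i < Fintype.card F := by
    intro i
    fin_cases i <;> simp <;> omega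
  have hcoeff := eq_zero_of_forall_sum_mul_pow_eq_zero hinj hlt
    (c := ![∑ u ∈ W, dot3 v₁ u ^ (p ^ e + 1) + 2 * x.1 ^ (p ^ e + 1),
      ∑ u ∈ W, dot3 v₁ u ^ p ^ e * dot3 v₂ u + 2 * (x.1 ^ p ^ e * x.2),
      ∑ u ∈ W, dot3 v₁ u * dot3 v₂ u ^ p ^ e + 2 * (x.1 * x.2 ^ p ^ e),
      ∑ u ∈ W, dot3 v₂ u ^ (p ^ e + 1) + 2 * x.2 ^ (p ^ e + 1)])
    (fun b => by
      have hb := hx.sum_pow (p ^ e + 1) hp.pow.add_one 1 b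
      simp only [one_mul, add_mul_pow_char_pow_succ, sum_add_distrib, ← sum_mul] at hb
      simp only [Fin.sum_univ_four, Fin.isValue, Matrix.cons_val, pow_zero, pow_one]
      linear_combination hb) 2
  simp only [Fin.isValue, Matrix.cons_val] at hcoeff
  linear_combination hcoeff

end Moments

section Pencil

variable {F : Type*} [Field F]

/-- The left-hand sides are the cofactors of the symmetric matrix `(gᵢⱼ)`: the hypothesis says
that the quadratic form of its adjugate vanishes at every point `(1, s, s²)` of the conic. -/
theorem cofactors_of_forall_pencil [Fintype F] (hq : 5 ≤ Fintype.card F) (h2 : (2 : F) ≠ 0)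
    {g₀₀ g₀₁ g₀₂ g₁₁ g₁₂ g₂₂ : F}
    (h : ∀ s : F, (s ^ 4 * g₀₀ - 2 * s ^ 2 * g₀₂ + g₂₂) * (s ^ 2 * g₀₀ - 2 * s * g₀₁ + g₁₁)
      = (-s ^ 3 * g₀₀ + s ^ 2 * g₀₁ + s * g₀₂ - g₁₂) ^ 2) :
    g₁₁ * g₂₂ = g₁₂ ^ 2 ∧ g₀₂ * g₁₂ = g₀₁ * g₂₂ ∧ g₀₁ * g₀₂ = g₀₀ * g₁₂ ∧
      g₀₀ * g₁₁ = g₀₁ ^ 2 ∧ g₀₀ * g₂₂ - g₀₂ ^ 2 = 2 * (g₀₂ * g₁₁ - g₀₁ * g₁₂) := by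
  have hc := eq_zero_of_forall_sum_mul_pow_eq_zero (e := ![0, 1, 2, 3, 4]) (by decide)
    (by intro i; fin_cases i <;> simp <;> omega)
    (c := ![g₁₁ * g₂₂ - g₁₂ ^ 2, 2 * (g₀₂ * g₁₂ - g₀₁ * g₂₂),
      g₀₀ * g₂₂ - g₀₂ ^ 2 - 2 * (g₀₂ * g₁₁ - g₀₁ * g₁₂), 2 * (g₀₁ * g₀₂ - g₀₀ * g₁₂),
      g₀₀ * g₁₁ - g₀₁ ^ 2])
    (fun s => by
      simp only [Fin.sum_univ_five, Fin.isValue, Matrix.cons_val, pow_zero, pow_one]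
      linear_combination h s)
  have c₀ := hc 0
  have c₁ := hc 1
  have c₂ := hc 2
  have c₃ := hc 3
  have c₄ := hc 4
  simp only [Fin.isValue, Matrix.cons_val, mul_eq_zero, h2, false_or, sub_eq_zero] at c₀ c₁ c₂ c₃ c₄
  exact ⟨c₀, c₁, c₃, c₄, c₂⟩

theorem exists_rankOne_of_minors (h2 : (2 : F) ≠ 0) {g₀₀ g₀₁ g₀₂ g₁₁ g₁₂ g₂₂ r₁ r₂ : F}
    (hr : (r₁, r₂) ≠ 0) (h₁₁ : g₁₁ = -2 * r₁ ^ 2) (h₁₂ : g₁₂ = -2 * (r₁ * r₂))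
    (h₂₂ : g₂₂ = -2 * r₂ ^ 2) (m₀₁ : g₀₀ * g₁₁ = g₀₁ ^ 2) (m₀₂ : g₀₀ * g₂₂ = g₀₂ ^ 2)
    (m₁ : g₀₁ * g₁₂ = g₀₂ * g₁₁) (m₂ : g₀₂ * g₁₂ = g₀₁ * g₂₂) :
    ∃ r₀, g₀₀ = -2 * r₀ ^ 2 ∧ g₀₁ = -2 * (r₀ * r₁) ∧ g₀₂ = -2 * (r₀ * r₂) := by
  by_cases h₁ : r₁ = 0
  · have h₂ : r₂ ≠ 0 := fun h₂ => hr (by simp [h₁, h₂])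
    subst h₁
    obtain ⟨r₀, hr₀⟩ : ∃ r₀, g₀₂ = -2 * (r₀ * r₂) := ⟨-g₀₂ / (2 * r₂), by field_simp⟩
    have hcancel {a b : F} : a * (2 * r₂ ^ 2) = b * (2 * r₂ ^ 2) → a = b :=
      mul_right_cancel₀ (mul_ne_zero h2 (pow_ne_zero 2 h₂))
    refine ⟨r₀, hcancel ?_, hcancel ?_, hr₀⟩
    · linear_combination g₀₀ * h₂₂ - m₀₂ - (g₀₂ - 2 * r₀ * r₂) * hr₀
    · linear_combination g₀₁ * h₂₂ + m₂ - g₀₂ * h₁₂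
  · obtain ⟨r₀, hr₀⟩ : ∃ r₀, g₀₁ = -2 * (r₀ * r₁) := ⟨-g₀₁ / (2 * r₁), by field_simp⟩
    have hcancel {a b : F} : a * (2 * r₁ ^ 2) = b * (2 * r₁ ^ 2) → a = b :=
      mul_right_cancel₀ (mul_ne_zero h2 (pow_ne_zero 2 h₁))
    refine ⟨r₀, hcancel ?_, hr₀, hcancel ?_⟩
    · linear_combination g₀₀ * h₁₁ - m₀₁ - (g₀₁ - 2 * r₀ * r₁) * hr₀
    · linear_combination g₀₂ * h₁₁ + m₁ - g₀₁ * h₁₂ + 2 * r₁ * r₂ * hr₀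

theorem eq_zero_of_cofactors_of_ne {g₀₀ g₀₁ g₀₂ g₁₁ g₁₂ g₂₂ : F}
    (c₁ : g₀₂ * g₁₂ = g₀₁ * g₂₂) (c₃ : g₀₁ * g₀₂ = g₀₀ * g₁₂) (c₄ : g₀₀ * g₁₁ = g₀₁ ^ 2)
    (c₂ : g₀₀ * g₂₂ - g₀₂ ^ 2 = 2 * (g₀₂ * g₁₁ - g₀₁ * g₁₂)) (hdet : g₀₀ * g₂₂ ≠ g₀₂ ^ 2) :
    g₀₀ = 0 ∧ g₀₁ = 0 ∧ g₁₂ = 0 ∧ g₀₂ ≠ 0 ∧ g₁₁ ≠ 0 := by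
  have hA : g₀₂ * g₁₁ - g₀₁ * g₁₂ ≠ 0 := fun h => hdet (by linear_combination c₂ + 2 * h)
  have hg₀₀ : g₀₀ = 0 :=
    (mul_eq_zero.mp (by linear_combination g₀₂ * c₄ + g₀₁ * c₃ : g₀₀ * _ = 0)).resolve_right hA
  have hg₀₁ : g₀₁ = 0 := pow_eq_zero_iff two_ne_zero |>.mp (by rw [← c₄, hg₀₀, zero_mul])
  have hg₀₂ : g₀₂ ≠ 0 := fun h => hdet (by rw [hg₀₀, h]; ring)
  refine ⟨hg₀₀, hg₀₁, ?_, hg₀₂, fun h => hA (by rw [h, hg₀₁]; ring)⟩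
  exact (mul_eq_zero.mp (by rw [c₁, hg₀₁, zero_mul])).resolve_left hg₀₂

end Pencil

section Main

variable {F : Type*} [Field F] {W : Finset (F × F × F)}

/-- `r` projects from every conic point onto one of the missed points `±x`, so `r - u` is never
on the conic. -/
theorem extendable_of_secondMoment_eq [DecidableEq F] (h2 : (2 : F) ≠ 0) (hW : NoDetermine W)
    (hmiss : ∀ v₁ v₂, IsConicPair v₁ v₂ → ∃ x, ProjectionMisses W v₁ v₂ x) {r : F × F × F}
    (hr : ∀ v w, secondMoment W v w = -2 * (dot3 v r * dot3 w r)) : Extendable W := by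
  have hproj (v₁ v₂ : F × F × F) (hv : IsConicPair v₁ v₂) (u : F × F × F) (hu : u ∈ W) :
      (dot3 v₁ u, dot3 v₂ u) ≠ (dot3 v₁ r, dot3 v₂ r) := by
    obtain ⟨x, hx⟩ := hmiss v₁ v₂ hv
    obtain ⟨h₁, h₂, h₁₂⟩ := hx.secondMoment_eq h2
    rw [hr] at h₁ h₂ h₁₂
    have hcancel {a b : F} (h : -2 * a = -2 * b) : a = b := mul_left_cancel₀ (neg_ne_zero.mpr h2) h
    rcases eq_or_eq_neg_of_sq_eq_sq_of_mul_eq_mul (hcancel (by rw [← h₁]; ring))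
      (hcancel (by rw [← h₂]; ring)) (hcancel h₁₂) with h | h
    · exact h ▸ hx.ne_of_mem u hu
    · exact h ▸ hx.ne_neg_of_mem u hu
  refine ⟨r, fun hrW => hproj _ _ isConicPair_infty r hrW rfl, hW.insert fun u hu hQ => ?_⟩
  obtain ⟨v₁, v₂, hv, h₁, h₂⟩ := exists_isConicPair_of_quadQ_eq_zero hQ
  rw [dot3_sub, sub_eq_zero] at h₁ h₂
  exact hproj v₁ v₂ hv u hu (by rw [h₁, h₂])

theorem sum_pencil_mul_pow_char_pow {p : ℕ} [Fact p.Prime] [CharP F p] (hp : Odd p) (e : ℕ)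
    (s : F) : ∑ u ∈ W, dot3 (s ^ 2, 0, -1) u * dot3 (-s, 1, 0) u ^ p ^ e
      = -∑ u ∈ W, u.2.2 * u.2.1 ^ p ^ e + s ^ 2 * ∑ u ∈ W, u.1 * u.2.1 ^ p ^ e
        + s ^ p ^ e * ∑ u ∈ W, u.2.2 * u.1 ^ p ^ e - s ^ (p ^ e + 2) * ∑ u ∈ W, u.1 ^ (p ^ e + 1) := by
  simp only [mul_sum, ← sum_neg_distrib, ← sum_add_distrib, ← sum_sub_distrib]
  refine sum_congr rfl fun u _ => ?_
  simp only [dot3, zero_mul, add_zero, one_mul, neg_mul]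
  rw [add_pow_char_pow, hp.pow.neg_pow, mul_pow]
  ring

/-- Along the pencil, `(x s).1 (x s).2 ^ p^e` would be linear in `s`, but the Frobenius moment
`∑ (v₁·u)(v₂·u)^{p^e}` only involves the powers `1, s², s^{p^e}, s^{p^e+2}`. -/
theorem not_forall_projectionMisses_pencil [Fintype F] {p e : ℕ} [Fact p.Prime] [CharP F p]
    (hp : Odd p) (he : e ≠ 0) (hq : p ^ e + 2 < Fintype.card F) {x : F → F × F} {c d : F}
    (hc : c ≠ 0) (hd : d ≠ 0) (hsq : ∀ s, (x s).2 ^ 2 = d) (hmul : ∀ s, (x s).1 * (x s).2 = c * s) :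
    ¬ ∀ s, ProjectionMisses W (s ^ 2, 0, -1) (-s, 1, 0) (x s) := by
  intro hx
  obtain ⟨t, ht⟩ := hp.pow (n := e)
  have h2 : (2 : F) ≠ 0 := two_ne_zero_of_odd hp
  have hφ : 3 ≤ p ^ e := (Fact.out : p.Prime).three_le_of_odd hp |>.trans (Nat.le_self_pow he p)
  have hinj : Function.Injective ![0, 1, 2, p ^ e, p ^ e + 2] := by
    intro i j hij
    have := (Fact.out : p.Prime).one_lt
    have := Nat.odd_iff.mp hp
    fin_cases i <;> fin_cases j <;> simp at hij ⊢ <;> omega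
  have hlt : ∀ i, ![0, 1, 2, p ^ e, p ^ e + 2] i < Fintype.card F := by
    intro i
    fin_cases i <;> simp <;> omega
  have hcoeff := eq_zero_of_forall_sum_mul_pow_eq_zero hinj hlt
    (c := ![-∑ u ∈ W, u.2.2 * u.2.1 ^ p ^ e, 2 * c * d ^ t, ∑ u ∈ W, u.1 * u.2.1 ^ p ^ e,
      ∑ u ∈ W, u.2.2 * u.1 ^ p ^ e, -∑ u ∈ W, u.1 ^ (p ^ e + 1)])
    (fun s => by
      have hs := (hx s).sum_mul_pow_char_pow hp he (by omega)
      have hαβ : (x s).1 * (x s).2 ^ p ^ e = c * d ^ t * s := by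
        rw [ht, pow_succ, pow_mul, hsq, mul_left_comm, hmul]
        ring
      rw [sum_pencil_mul_pow_char_pow hp, hαβ] at hs
      simp only [Fin.sum_univ_five, Fin.isValue, Matrix.cons_val, pow_zero, pow_one]
      linear_combination hs) 1
  simp [h2, hc, hd] at hcoeff

end Main

theorem extendable_of_sum_eq_zero {F : Type*} [Field F] [Fintype F] [DecidableEq F] {p e : ℕ}
    [Fact p.Prime] [CharP F p] (hp : Odd p) (he : e ≠ 0) (hq : Fintype.card F = p ^ (e + 1))
    {W : Finset (F × F × F)} (hW : NoDetermine W) (hcard : W.card = Fintype.card F ^ 2 - 2)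
    (hsum : ∑ u ∈ W, u = 0) : Extendable W := by
  have h2 : (2 : F) ≠ 0 := two_ne_zero_of_odd hp
  have hp3 : 3 ≤ p := (Fact.out : p.Prime).three_le_of_odd hp
  have hφ : 3 ≤ p ^ e := hp3.trans (Nat.le_self_pow he p)
  have hpe : p ^ e + 2 < Fintype.card F := by
    rw [hq, pow_succ]
    nlinarith
  have hmiss (v₁ v₂ : F × F × F) (hv : IsConicPair v₁ v₂) := exists_projectionMisses hW hcard hsum hv
  choose x hx using fun s : F => hmiss _ _ (isConicPair_pencil s)
  have hM (s : F) := (hx s).pencil_moments h2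
  set g₀₀ := ∑ u ∈ W, u.1 * u.1
  set g₀₁ := ∑ u ∈ W, u.1 * u.2.1
  set g₀₂ := ∑ u ∈ W, u.1 * u.2.2
  set g₁₁ := ∑ u ∈ W, u.2.1 * u.2.1
  set g₁₂ := ∑ u ∈ W, u.2.1 * u.2.2
  set g₂₂ := ∑ u ∈ W, u.2.2 * u.2.2
  obtain ⟨c₀, c₁, c₃, c₄, c₂⟩ := cofactors_of_forall_pencil (by omega) h2 fun s => by
    obtain ⟨h₁, h₂, h₁₂⟩ := hM s
    rw [h₁, h₂, h₁₂]
    ring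
  by_cases hdet : g₀₀ * g₂₂ = g₀₂ ^ 2
  · obtain ⟨h₂₂, h₁₁, h₁₂⟩ := hM 0
    obtain ⟨r₀, e₀₀, e₀₁, e₀₂⟩ := exists_rankOne_of_minors h2 (r₁ := (x 0).2) (r₂ := -(x 0).1)
      (fun h => (hx 0).ne_zero (by simpa [Prod.ext_iff, and_comm] using h))
      (by linear_combination h₁₁) (by linear_combination -h₁₂) (by linear_combination h₂₂) c₄ hdet
      (mul_left_cancel₀ h2 (by linear_combination c₂ - hdet)) c₁
    exact extendable_of_secondMoment_eq h2 hW hmiss (r := (r₀, (x 0).2, -(x 0).1))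
      (secondMoment_eq_of_sum_mul_eq e₀₀ e₀₁ e₀₂ (by linear_combination h₁₁)
        (by linear_combination -h₁₂) (by linear_combination h₂₂))
  · obtain ⟨hg₀₀, hg₀₁, hg₁₂, hg₀₂, hg₁₁⟩ := eq_zero_of_cofactors_of_ne c₁ c₃ c₄ c₂ hdet
    refine absurd hx (not_forall_projectionMisses_pencil hp he hpe (c := -g₀₂ / 2)
      (d := -g₁₁ / 2) (by simp [h2, hg₀₂]) (by simp [h2, hg₁₁]) (fun s => ?_) (fun s => ?_))
    · field_simp
      linear_combination (hM s).2.1 + 2 * s * hg₀₁ - s ^ 2 * hg₀₀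
    · field_simp
      linear_combination (hM s).2.2 - s ^ 2 * hg₀₁ + s ^ 3 * hg₀₀ + hg₁₂

theorem stmt_11 {p h : ℕ} (hp : p.Prime) (hodd : Odd p) (hh : 1 < h)
    {F : Type*} [Field F] [Fintype F] [DecidableEq F]
    (hcard : Fintype.card F = p ^ h)
    (U : Finset (F × F × F))
    (hUcard : U.card = Fintype.card F ^ 2 - 2)
    (hU : NoDetermine U) :
    ∃ v : F × F × F, v ∉ U ∧ NoDetermine (insert v U) := by
  have := Fact.mk hp
  have := charP_of_card_eq_prime_pow hcard
  obtain ⟨m, hm⟩ := exists_sum_image_add_eq_zero (F := F) U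
    (by rw [hUcard, cast_card_sq_sub_two, neg_ne_zero]; exact two_ne_zero_of_odd hodd)
  refine Extendable.of_image_add_right (extendable_of_sum_eq_zero hodd (e := h - 1) (by omega)
    (by rw [hcard, Nat.sub_add_cancel hh.le]) (hU.image_add_right m) ?_ hm)
  rw [card_image_of_injective _ (add_left_injective m), hUcard]
end

section
/- Let U ⊆ F_q³ be a set of q² − 2 points that does not determine the points of C, with ∑_{u∈U} u = (0,0,0). Then for every (y,z,w) ∈ F_q³ one has the identity in F_q[X]: ∑_{u∈U} (X + u·(y,z,w))^{q−1} = −2 · ∑_{k=0}^{(q−1)/2} σ₂(y,z,w)^k · X^{q−1−2k}. -/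
/-!
Fix a point `t = (1, s, s²)` of the conic. The fibres of the projection
`u ↦ (u₁ - s u₀, u₂ - s² u₀)` are the lines in direction `t`, and `Q(t) = 0`, so the projection is
injective on `U` and maps `U` onto `F²` minus two points.
For `y` in the plane `y · t = 0` the form `u ↦ u · y` factors through this projection, and a power
of a linear form sums to `0` over `F²`. Hence `P_j(y) = ∑ (u · y)^j = -α^j - β^j`, and `β = -α`
because `∑ u = 0`. So `P_j + (1 + (-1)^j) (-P₂/2)^(j/2)` vanishes on every such plane. Over
`F[x₁]` this is a polynomial of degree `j < q` in `x₀` with the `q` distinct roots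
`x₀ = -(s x₁ + s² x₂)`, so it vanishes everywhere. The theorem then follows from
`(X + a)^(q-1) = ∑ (-a)^j X^(q-1-j)` and `σ₂ = -P₂/2`.
-/

open Polynomial Finset

theorem Multiset.esymm_cons_two {R : Type*} [CommSemiring R] (a : R) (s : Multiset R) :
    (a ::ₘ s).esymm 2 = a * s.sum + s.esymm 2 := by
  have hmul : (s.map (a * ·)).sum = a * s.sum := by simpa using sum_map_mul_left (f := id)
  simp only [esymm, powersetCard_cons, powersetCard_one, map_add, sum_add, map_map,
    Function.comp_def, prod_cons, prod_singleton, hmul]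
  ring

theorem Multiset.two_mul_esymm_two {R : Type*} [CommRing R] (s : Multiset R) :
    2 * s.esymm 2 = s.sum ^ 2 - (s.map (· ^ 2)).sum := by
  induction s using Multiset.induction_on with
  | empty => simp [esymm, powersetCard_zero_right]
  | cons a s ih => rw [esymm_cons_two, sum_cons, map_cons, sum_cons]; linear_combination ih

theorem Finset.exists_sum_comp_eq_sum_sub {ι G M : Type*} [Fintype G] [AddCommGroup M]
    {U : Finset ι} {Φ : ι → G} (hΦ : Set.InjOn Φ U) (hcard : #U + 2 = Fintype.card G) :
    ∃ m₁ m₂ : G, ∀ f : G → M, ∑ u ∈ U, f (Φ u) = ∑ ξ, f ξ - f m₁ - f m₂ := by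
  classical
  have hcompl : #(U.image Φ)ᶜ = 2 := by
    rw [card_compl, card_image_of_injOn hΦ]; omega
  obtain ⟨m₁, m₂, hm, hV⟩ := card_eq_two.mp hcompl
  refine ⟨m₁, m₂, fun f => ?_⟩
  rw [← sum_image hΦ, ← sum_add_sum_compl (U.image Φ) f, hV, sum_pair hm]
  abel

theorem Finset.sum_range_two_mul_add_one_of_odd_eq_zero {M : Type*} [AddCommMonoid M]
    {f : ℕ → M} {n : ℕ} (hf : ∀ j < 2 * n + 1, Odd j → f j = 0) :
    ∑ j ∈ range (2 * n + 1), f j = ∑ k ∈ range (n + 1), f (2 * k) := by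
  induction n with
  | zero => simp
  | succ n ih =>
    rw [show 2 * (n + 1) + 1 = 2 * n + 1 + 1 + 1 by ring, sum_range_succ, sum_range_succ,
      ih fun j hj => hf j (by omega), hf _ (by omega) (odd_two_mul_add_one n), add_zero,
      sum_range_succ (n := n + 1)]
    rfl

section FiniteField
variable {F : Type*} [Field F] [Fintype F]

theorem X_add_C_pow_card_sub_one (a : F) :
    (X + C a) ^ (Fintype.card F - 1) =
      ∑ j ∈ range (Fintype.card F), C ((-a) ^ j) * X ^ (Fintype.card F - 1 - j) := by
  apply mul_right_cancel₀ (X_add_C_ne_zero a)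
  have hgeom := geom_sum₂_mul (C (-a)) (X : F[X]) (Fintype.card F)
  simp only [← map_pow] at hgeom
  calc (X + C a) ^ (Fintype.card F - 1) * (X + C a)
      = expand F (Fintype.card F) (X + C a) := by
        rw [← pow_succ, Nat.sub_add_cancel Fintype.card_pos, FiniteField.expand_card]
    _ = -(C ((-a) ^ Fintype.card F) - X ^ Fintype.card F) := by
        simp [FiniteField.pow_card]
    _ = _ := by rw [← hgeom]; simp only [map_neg]; ring

theorem sum_linear_pow_eq_zero_s12 (c₁ c₂ : F) (j : ℕ) :
    ∑ ξ : F × F, (c₁ * ξ.1 + c₂ * ξ.2) ^ j = 0 := by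
  have hq : (Fintype.card F : F) = 0 := FiniteField.cast_card_eq_zero F
  by_cases hc₁ : c₁ = 0
  · simp [Fintype.sum_prod_type, hc₁, hq]
  · have affine (b : F) : ∑ x : F, (c₁ * x + b) ^ j = ∑ z : F, z ^ j :=
      Fintype.sum_equiv ((Equiv.mulLeft₀ _ hc₁).trans (Equiv.addRight b)) _ _ fun _ => rfl
    simp [Fintype.sum_prod_type_right, affine, hq]

theorem sum_X_add_C_pow_card_sub_one_eq {ι : Type*} {n : ℕ}
    (hq : Fintype.card F = 2 * n + 1) (s : Finset ι) (a : ι → F) (σ : F)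
    (hpow : ∀ j < Fintype.card F, ∑ i ∈ s, a i ^ j = -(1 + (-1) ^ j) * σ ^ (j / 2)) :
    ∑ i ∈ s, (X + C (a i)) ^ (Fintype.card F - 1) =
      -2 * ∑ k ∈ range ((Fintype.card F - 1) / 2 + 1),
        C (σ ^ k) * X ^ (Fintype.card F - 1 - 2 * k) := by
  simp_rw [X_add_C_pow_card_sub_one]
  rw [sum_comm]
  simp_rw [← sum_mul, ← map_sum]
  rw [hq] at hpow ⊢
  rw [Nat.add_sub_cancel, Nat.mul_div_cancel_left n two_pos, mul_sum,
    sum_range_two_mul_add_one_of_odd_eq_zero]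
  · refine sum_congr rfl fun k hk => ?_
    rw [mem_range] at hk
    simp_rw [Even.neg_pow ⟨k, two_mul k⟩, hpow (2 * k) (by omega), pow_mul, neg_one_sq,
      Nat.mul_div_cancel_left k two_pos]
    simp
    ring
  · intro j hj hodd
    simp [hodd.neg_pow, hpow j hj]

end FiniteField

section PowerSum
variable {F A B : Type*} [Field F] [CommRing A] [Algebra F A] [CommRing B] [Algebra F B]

/-- Defined over any `F`-algebra so that it can be evaluated at polynomials. -/
def powerSum (U : Finset (F × F × F)) (j : ℕ) (a : A × A × A) : A :=
  ∑ u ∈ U, (u.1 • a.1 + u.2.1 • a.2.1 + u.2.2 • a.2.2) ^ j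

def powerSumDefect (U : Finset (F × F × F)) (j : ℕ) (a : A × A × A) : A :=
  powerSum U j a + (1 + (-1) ^ j : F) • ((-2⁻¹ : F) • powerSum U 2 a) ^ (j / 2)

theorem powerSum_eq_sum_dot3 (U : Finset (F × F × F)) (j : ℕ) (v : F × F × F) :
    powerSum U j v = ∑ u ∈ U, dot3 u v ^ j := rfl

theorem map_powerSumDefect (f : A →ₐ[F] B) (U : Finset (F × F × F)) (j : ℕ) (a : A × A × A) :
    f (powerSumDefect U j a) = powerSumDefect U j (f a.1, f a.2.1, f a.2.2) := by
  simp [powerSumDefect, powerSum, map_smul]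

theorem natDegree_powerSumDefect_le {R : Type*} [CommRing R] [Algebra F R]
    (U : Finset (F × F × F)) (j : ℕ) {a : R[X] × R[X] × R[X]}
    (h₁ : a.1.natDegree ≤ 1) (h₂ : a.2.1.natDegree ≤ 1) (h₃ : a.2.2.natDegree ≤ 1) :
    (powerSumDefect U j a).natDegree ≤ j := by
  have hlin : ∀ u : F × F × F, (u.1 • a.1 + u.2.1 • a.2.1 + u.2.2 • a.2.2).natDegree ≤ 1 :=
    fun u => natDegree_add_le_of_degree_le (natDegree_add_le_of_degree_le
      ((natDegree_smul_le _ _).trans h₁) ((natDegree_smul_le _ _).trans h₂))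
      ((natDegree_smul_le _ _).trans h₃)
  have hsum : ∀ i, (powerSum U i a).natDegree ≤ i := fun i =>
    natDegree_sum_le_of_forall_le _ _ fun u _ =>
      natDegree_pow_le.trans (by simpa using Nat.mul_le_mul_left i (hlin u))
  refine natDegree_add_le_of_degree_le (hsum j) ((natDegree_smul_le _ _).trans ?_)
  calc _ ≤ j / 2 * ((-2⁻¹ : F) • powerSum U 2 a).natDegree := natDegree_pow_le
    _ ≤ j / 2 * 2 := Nat.mul_le_mul_left _ ((natDegree_smul_le _ _).trans (hsum 2))
    _ ≤ j := Nat.div_mul_le_self j 2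

end PowerSum

section SumZero
variable {F : Type*} [Field F] {U : Finset (F × F × F)}

theorem sum_dot3_eq_zero (hsum : ∑ u ∈ U, u = 0) (y : F × F × F) :
    ∑ u ∈ U, dot3 u y = 0 := by
  have h₁ := congrArg Prod.fst hsum
  have h₂ := congrArg (·.2.1) hsum
  have h₃ := congrArg (·.2.2) hsum
  simp only [Prod.fst_sum, Prod.snd_sum, Prod.fst_zero, Prod.snd_zero] at h₁ h₂ h₃
  simp [dot3, sum_add_distrib, ← sum_mul, h₁, h₂, h₃]

theorem sigmaU_two_eq (h2 : (2 : F) ≠ 0) (hsum : ∑ u ∈ U, u = 0) (v : F × F × F) :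
    sigmaU U v 2 = -2⁻¹ * powerSum U 2 v := by
  have h := Multiset.two_mul_esymm_two (U.val.map (dot3 · v))
  rw [Multiset.map_map] at h
  change 2 * sigmaU U v 2 = (∑ u ∈ U, dot3 u v) ^ 2 - ∑ u ∈ U, dot3 u v ^ 2 at h
  rw [sum_dot3_eq_zero hsum] at h
  rw [powerSum_eq_sum_dot3]
  field_simp
  linear_combination h

end SumZero

section Plane
variable {F : Type*} [Field F] [Fintype F] {U : Finset (F × F × F)}

theorem exists_powerSum_eq_of_plane (hU : NoDetermine U) (hUcard : #U + 2 = Fintype.card F ^ 2)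
    (hsum : ∑ u ∈ U, u = 0) {s : F} {y : F × F × F} (hy : y.1 + s * y.2.1 + s ^ 2 * y.2.2 = 0) :
    ∃ α : F, ∀ j, powerSum U j y = -α ^ j - (-α) ^ j := by
  set Φ : F × F × F → F × F := fun u => (u.2.1 - s * u.1, u.2.2 - s ^ 2 * u.1)
  have hΦ : Set.InjOn Φ U := by
    intro u hu u' hu' h
    by_contra hne
    apply hU u hu u' hu' hne
    simp only [Φ, Prod.mk.injEq] at h
    simp only [quadQ, Prod.fst_sub, Prod.snd_sub]
    linear_combination (u.2.1 - u'.2.1 + s * (u.1 - u'.1)) * h.1 - (u.1 - u'.1) * h.2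
  have hdot : ∀ u, dot3 u y = y.2.1 * (Φ u).1 + y.2.2 * (Φ u).2 := fun u => by
    simp only [dot3, Φ]; linear_combination u.1 * hy
  obtain ⟨m₁, m₂, hm⟩ := exists_sum_comp_eq_sum_sub (M := F) hΦ
    (by rwa [Fintype.card_prod, ← sq])
  set α := y.2.1 * m₁.1 + y.2.2 * m₁.2
  set β := y.2.1 * m₂.1 + y.2.2 * m₂.2
  have hpow : ∀ j, powerSum U j y = -α ^ j - β ^ j := fun j => by
    simp only [powerSum_eq_sum_dot3, hdot]
    rw [hm (fun ξ => (y.2.1 * ξ.1 + y.2.2 * ξ.2) ^ j), sum_linear_pow_eq_zero_s12]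
    ring
  have hβ : β = -α := by
    have h₁ := hpow 1
    rw [powerSum_eq_sum_dot3] at h₁
    simp only [pow_one, sum_dot3_eq_zero hsum] at h₁
    linear_combination h₁
  exact ⟨α, by simpa [hβ] using hpow⟩

theorem powerSumDefect_eq_zero_of_plane (h2 : (2 : F) ≠ 0) (hU : NoDetermine U)
    (hUcard : #U + 2 = Fintype.card F ^ 2) (hsum : ∑ u ∈ U, u = 0) {s : F} {y : F × F × F}
    (hy : y.1 + s * y.2.1 + s ^ 2 * y.2.2 = 0) (j : ℕ) : powerSumDefect U j y = 0 := by
  obtain ⟨α, hα⟩ := exists_powerSum_eq_of_plane hU hUcard hsum hy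
  have hsq : (-2⁻¹ : F) * (-α ^ 2 - (-α) ^ 2) = α ^ 2 := by field_simp; ring
  rcases Nat.even_or_odd j with ⟨k, rfl⟩ | ⟨k, rfl⟩
  · simp only [powerSumDefect, hα, smul_eq_mul, hsq, ← two_mul, Nat.mul_div_cancel_left k two_pos]
    rw [pow_mul, pow_mul, pow_mul, neg_sq, neg_one_sq]
    ring
  · simp [powerSumDefect, hα, Odd.neg_pow ⟨k, rfl⟩]

end Plane

theorem powerSumDefect_eq_zero {F : Type*} [Field F] [Fintype F] {U : Finset (F × F × F)}
    {j : ℕ} (hj : j < Fintype.card F)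
    (hplane : ∀ (s : F) (y : F × F × F),
      y.1 + s * y.2.1 + s ^ 2 * y.2.2 = 0 → powerSumDefect U j y = 0)
    (v : F × F × F) : powerSumDefect U j v = 0 := by
  set ρ : F → F[X] := fun s => -(C s * X + C (s ^ 2 * v.2.2))
  have hρ : ∀ s, (ρ s).natDegree ≤ 1 := fun s => by simp only [ρ]; compute_degree
  have hline : ∀ s, powerSumDefect U j (ρ s, X, C v.2.2) = 0 := fun s => by
    refine eq_zero_of_natDegree_lt_card_of_eval_eq_zero' _ univ (fun a _ => ?_) ?_
    · rw [← coe_aeval_eq_eval, map_powerSumDefect]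
      exact hplane s _ (by simp [ρ])
    · have := natDegree_powerSumDefect_le U j (a := (ρ s, X, C v.2.2)) (hρ s) natDegree_X_le
        (by simp)
      rw [card_univ]
      omega
  have hgeneric :
      powerSumDefect U j ((X, C X, C (C v.2.2)) : F[X][X] × F[X][X] × F[X][X]) = 0 := by
    refine eq_zero_of_natDegree_lt_card_of_eval_eq_zero _ (f := ρ) (fun s s' h => ?_)
      (fun s => ?_) ?_
    · have h₁ := congrArg (coeff · 1) h
      simpa only [ρ, coeff_neg, coeff_add, coeff_C_mul_X, coeff_C, one_ne_zero, if_true,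
        if_false, add_zero, neg_inj] using h₁
    · rw [← coe_aeval_eq_eval, ← AlgHom.coe_restrictScalars' F, map_powerSumDefect]
      simpa using hline s
    · exact (natDegree_powerSumDefect_le U j natDegree_X_le (by simp) (by simp)).trans_lt hj
  have := congrArg (fun G => aeval v.2.1 ((aeval (C v.1)).restrictScalars F G)) hgeneric
  simpa [map_powerSumDefect] using this

theorem powerSum_eq_of_lt_card {F : Type*} [Field F] [Fintype F] {U : Finset (F × F × F)}
    (h2 : (2 : F) ≠ 0) (hU : NoDetermine U) (hUcard : #U + 2 = Fintype.card F ^ 2)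
    (hsum : ∑ u ∈ U, u = 0) {j : ℕ} (hj : j < Fintype.card F) (v : F × F × F) :
    powerSum U j v = -(1 + (-1) ^ j) * sigmaU U v 2 ^ (j / 2) := by
  have h := powerSumDefect_eq_zero hj
    (fun _ _ hy => powerSumDefect_eq_zero_of_plane h2 hU hUcard hsum hy j) v
  rw [powerSumDefect, smul_eq_mul, smul_eq_mul, ← sigmaU_two_eq h2 hsum] at h
  linear_combination h

open Polynomial in
theorem stmt_12_general {p h : ℕ} (hodd : Odd p)
    {F : Type*} [Field F] [Fintype F]
    (hcard : Fintype.card F = p ^ h)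
    (U : Finset (F × F × F))
    (hUcard : U.card = Fintype.card F ^ 2 - 2)
    (hU : NoDetermine U)
    (hsum : ∑ u ∈ U, u = 0)
    (v : F × F × F) :
    ∑ u ∈ U, (X + C (dot3 u v)) ^ (Fintype.card F - 1) =
      -2 * ∑ k ∈ Finset.range ((Fintype.card F - 1) / 2 + 1),
        C (sigmaU U v 2 ^ k) * X ^ (Fintype.card F - 1 - 2 * k) := by
  obtain ⟨n, hn⟩ : Odd (Fintype.card F) := hcard ▸ hodd.pow
  have h2 : (2 : F) ≠ 0 := Ring.two_ne_zero fun hchar => by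
    have := FiniteField.even_card_iff_char_two.mp hchar
    omega
  have hUcard' : #U + 2 = Fintype.card F ^ 2 := by
    have := Fintype.one_lt_card (α := F)
    have := Nat.le_self_pow two_ne_zero (Fintype.card F)
    omega
  exact sum_X_add_C_pow_card_sub_one_eq hn U _ _ fun j hj =>
    powerSum_eq_of_lt_card h2 hU hUcard' hsum hj v

open Polynomial in
theorem stmt_12 {p h : ℕ} (hp : p.Prime) (hodd : Odd p) (hh : 1 ≤ h)
    {F : Type*} [Field F] [Fintype F] [DecidableEq F]
    (hcard : Fintype.card F = p ^ h)
    (U : Finset (F × F × F))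
    (hUcard : U.card = Fintype.card F ^ 2 - 2)
    (hU : NoDetermine U)
    (hsum : ∑ u ∈ U, u = 0)
    (v : F × F × F) :
    ∑ u ∈ U, (X + C (dot3 u v)) ^ (Fintype.card F - 1) =
      -2 * ∑ k ∈ Finset.range ((Fintype.card F - 1) / 2 + 1),
        C (sigmaU U v 2 ^ k) * X ^ (Fintype.card F - 1 - 2 * k) :=
  stmt_12_general hodd hcard U hUcard hU hsum v
end
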